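/- arXiv:1712.00478 — 2 statements merged into one kernel-verified Lean document; each statement's English description precedes it below -/
import Mathlib

section
/- Let κ be an infinite cardinal and let K be an infinite compact Hausdorff space with w(K) ≥ (2^{<κ})⁺, the cardinal successor of 2^{<κ}. Then the closed unit ball of C(K) contains a 2-equilateral set of cardinality κ. -/
/-!
Since `w(K) > 2^{<κ}`, no set of fewer than `κ` points is dense in `K`: in a regular space a
dense set `S` yields the base of regular open sets `int (cl A)`, `A ⊆ S`, so `w(K) ≤ 2^{|S|}`.
Hence one can choose points `xᵢ`, `i < κ`, with `xᵢ ∉ cl {xⱼ : j < i}`. Urysohn's lemma gives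
`fᵢ` in the unit ball with `fᵢ = -1` on that closure and `fᵢ (xᵢ) = 1`; for `j < i` the
functions `fᵢ, fⱼ` take the values `-1, 1` at `xⱼ`, so `‖fᵢ - fⱼ‖ = 2`.
-/

open Cardinal

/-- The weight of a topological space: the minimal infinite cardinality of a
base for its topology. -/
noncomputable def weight (X : Type u) [TopologicalSpace X] : Cardinal.{u} :=
  ⨅ B : {B : Set (Set X) // TopologicalSpace.IsTopologicalBasis B}, max #B.1 ℵ₀

open Set Topology TopologicalSpace

section Weight

variable {X : Type u} [TopologicalSpace X]

theorem weight_le_of_isTopologicalBasis {B : Set (Set X)} (hB : IsTopologicalBasis B) :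
    weight X ≤ max #B ℵ₀ :=
  ciInf_le (OrderBot.bddBelow _) (⟨B, hB⟩ : {B : Set (Set X) // IsTopologicalBasis B})

theorem Dense.isTopologicalBasis_interior_closure_image [RegularSpace X] {S : Set X}
    (hS : Dense S) :
    IsTopologicalBasis (range fun A : Set S => interior (closure (((↑) : S → X) '' A))) := by
  refine isTopologicalBasis_of_isOpen_of_nhds (by rintro _ ⟨A, rfl⟩; exact isOpen_interior) ?_
  intro x u hxu hu
  obtain ⟨t, ht, htc, htu⟩ := exists_mem_nhds_isClosed_subset (hu.mem_nhds hxu)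
  have hA : ((↑) : S → X) '' ((↑) ⁻¹' interior t) = interior t ∩ S := by
    rw [Subtype.image_preimage_coe, inter_comm]
  refine ⟨_, ⟨(↑) ⁻¹' interior t, rfl⟩, ?_, ?_⟩
  · show x ∈ interior (closure _)
    rw [hA]
    exact interior_maximal (hS.open_subset_closure_inter isOpen_interior) isOpen_interior
      (mem_interior_iff_mem_nhds.2 ht)
  · calc interior (closure (((↑) : S → X) '' ((↑) ⁻¹' interior t)))
        ⊆ closure (interior t ∩ S) := hA ▸ interior_subset
      _ ⊆ closure t := closure_mono (inter_subset_left.trans interior_subset)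
      _ = t := htc.closure_eq
      _ ⊆ u := htu

theorem Dense.infinite [T1Space X] [Infinite X] {S : Set X} (hS : Dense S) : S.Infinite :=
  fun hfin => infinite_univ (hS.closure_eq ▸ hfin.isClosed.closure_eq ▸ hfin)

theorem weight_le_two_pow_of_dense [T3Space X] [Infinite X] {S : Set X} (hS : Dense S) :
    weight X ≤ 2 ^ #S := by
  have hS_inf : ℵ₀ ≤ #S := infinite_iff.1 hS.infinite.to_subtype
  calc weight X ≤ max #(range fun A : Set S => interior (closure (((↑) : S → X) '' A))) ℵ₀ :=
        weight_le_of_isTopologicalBasis hS.isTopologicalBasis_interior_closure_image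
    _ ≤ max (2 ^ #S) ℵ₀ := max_le_max (mk_range_le.trans_eq mk_set) le_rfl
    _ = 2 ^ #S := max_eq_left (hS_inf.trans (cantor _).le)

theorem not_dense_of_mk_lt [T3Space X] [Infinite X] {κ : Cardinal.{u}}
    (hw : Order.succ (2 ^< κ) ≤ weight X) {S : Set X} (hS : #S < κ) : ¬Dense S := fun hd =>
  ((weight_le_two_pow_of_dense hd).trans (le_powerlt 2 hS)).not_gt
    ((Order.lt_succ _).trans_le hw)

end Weight

def IsLeftSeparated {ι X : Type*} [Preorder ι] [TopologicalSpace X] (x : ι → X) : Prop :=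
  ∀ i, x i ∉ closure (x '' Iio i)

theorem exists_isLeftSeparated {ι X : Type*} [Preorder ι] [WellFoundedLT ι] [TopologicalSpace X]
    (h : ∀ (i : ι) (y : Iio i → X), ¬Dense (range y)) : ∃ x : ι → X, IsLeftSeparated x := by
  have hnext : ∀ (i : ι) (y : ∀ j < i, X), ∃ p, p ∉ closure (range fun j : Iio i => y j j.2) := by
    intro i y
    simpa only [Dense, not_forall] using h i fun j => y j j.2
  choose next hnext using hnext
  refine ⟨(wellFounded_lt (α := ι)).fix next, fun i => ?_⟩
  rw [WellFounded.fix_eq, image_eq_range]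
  exact hnext i fun j _ => (wellFounded_lt (α := ι)).fix next j

section Urysohn

variable {X : Type*} [TopologicalSpace X] [CompactSpace X]

theorem exists_continuousMap_norm_le_one_eqOn_neg_one [T4Space X] {s : Set X}
    (hs : IsClosed s) {p : X} (hp : p ∉ s) :
    ∃ f : C(X, ℝ), ‖f‖ ≤ 1 ∧ EqOn f (-1) s ∧ f p = 1 := by
  obtain ⟨f, hfs, hfp, hf⟩ := exists_bounded_mem_Icc_of_closed_of_le hs isClosed_singleton
    (disjoint_singleton_right.2 hp) (by norm_num : (-1 : ℝ) ≤ 1)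
  exact ⟨f.toContinuousMap, (ContinuousMap.norm_le _ zero_le_one).2 fun x => abs_le.2 (hf x),
    hfs, hfp rfl⟩

theorem ContinuousMap.norm_sub_eq_two {f g : C(X, ℝ)} (hf : ‖f‖ ≤ 1) (hg : ‖g‖ ≤ 1) {x : X}
    (hfx : f x = 1) (hgx : g x = -1) : ‖f - g‖ = 2 := by
  refine le_antisymm ?_ ?_
  · calc ‖f - g‖ ≤ ‖f‖ + ‖g‖ := norm_sub_le f g
      _ ≤ 2 := by linarith
  · calc (2 : ℝ) = ‖(f - g) x‖ := by norm_num [hfx, hgx]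
      _ ≤ ‖f - g‖ := (f - g).norm_coe_le_norm x

end Urysohn

theorem IsLeftSeparated.exists_equilateral {ι K : Type*} [LinearOrder ι] [TopologicalSpace K]
    [CompactSpace K] [T2Space K] {x : ι → K} (hx : IsLeftSeparated x) :
    ∃ f : ι → C(K, ℝ), (∀ i, ‖f i‖ ≤ 1) ∧ ∀ i j, i ≠ j → ‖f i - f j‖ = 2 := by
  choose f hf_norm hf_pred hf_self using fun i =>
    exists_continuousMap_norm_le_one_eqOn_neg_one isClosed_closure (hx i)
  have hlt : ∀ i j, j < i → ‖f j - f i‖ = 2 := fun i j hji =>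
    ContinuousMap.norm_sub_eq_two (hf_norm j) (hf_norm i) (hf_self j)
      (hf_pred i (subset_closure ⟨j, hji, rfl⟩))
  refine ⟨f, hf_norm, fun i j hij => ?_⟩
  rcases hij.lt_or_gt with hij | hij
  · exact hlt j i hij
  · rw [norm_sub_rev]
    exact hlt i j hij

theorem statement9_general (κ : Cardinal.{u})
    (K : Type u) [TopologicalSpace K] [CompactSpace K] [T2Space K] [Infinite K]
    (hw : Order.succ (2 ^< κ) ≤ weight K) :
    ∃ A : Set C(K, ℝ), A ⊆ Metric.closedBall 0 1 ∧ #A = κ ∧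
      ∀ f ∈ A, ∀ g ∈ A, f ≠ g → ‖f - g‖ = 2 := by
  have h_not_dense : ∀ (i : κ.ord.ToType) (y : Iio i → K), ¬Dense (range y) := fun i _ =>
    not_dense_of_mk_lt hw <| mk_range_le.trans_lt <|
      (mk_Iio_lt i (by simp)).trans_eq (mk_ord_toType κ)
  obtain ⟨x, hx⟩ := exists_isLeftSeparated h_not_dense
  obtain ⟨f, hf_norm, hf_dist⟩ := hx.exists_equilateral
  have hf_inj : Function.Injective f := fun i j hij =>
    by_contra fun hne => by simpa [hij] using hf_dist i j hne
  refine ⟨range f, range_subset_iff.2 fun i => mem_closedBall_zero_iff.2 (hf_norm i), ?_, ?_⟩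
  · rw [mk_range_eq f hf_inj, mk_ord_toType]
  · rintro _ ⟨i, rfl⟩ _ ⟨j, rfl⟩ hne
    exact hf_dist i j (ne_of_apply_ne f hne)

/-- If `w(K) ≥ (2^{<κ})⁺` for an infinite cardinal `κ`, then the closed unit ball of `C(K)`
contains a `2`-equilateral set of cardinality `κ`. -/
theorem statement9 (κ : Cardinal.{u}) (hκ : ℵ₀ ≤ κ)
    (K : Type u) [TopologicalSpace K] [CompactSpace K] [T2Space K] [Infinite K]
    (hw : Order.succ (2 ^< κ) ≤ weight K) :
    ∃ A : Set C(K, ℝ), A ⊆ Metric.closedBall 0 1 ∧ #A = κ ∧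
      ∀ f ∈ A, ∀ g ∈ A, f ≠ g → ‖f - g‖ = 2 :=
  statement9_general κ K hw
end

section
/- Let K be an infinite compact Hausdorff space. Then the closed unit ball of C(K) contains a 1-separated set of cardinality w(K). -/
/-!
Take, by Zorn's lemma, a maximal `1`-separated subset `M` of the unit ball. A function of norm
`≤ 1` is at distance `≥ 1` from `f` as soon as it equals `±1` at a point where `f` has the
opposite sign, and by Tietze such functions can be prescribed on any finite set. Hence maximality
forces `M` to separate points (otherwise take `-1` at `x` and `1` at `y` where all of `M` agree)
and to be infinite (otherwise prescribe signs at `|M|` distinct points, one per element).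
A point-separating family `A` makes `x ↦ (f x)_{f ∈ A}` an embedding of the compact space `K`
into `ℝ^A`, so the preimages of rational intervals under members of `A` form a subbasis, and
`w(K) ≤ |A| ⬝ ℵ₀ = |M|`.
-/

open Cardinal

open Set TopologicalSpace Topology

theorem exists_maximal_subset_pairwise {α : Type*} (t : Set α) (r : α → α → Prop) :
    ∃ M, Maximal (fun A => A ⊆ t ∧ A.Pairwise r) M := by
  refine zorn_subset _ fun c hct hc => ⟨⋃₀ c, ⟨sUnion_subset fun A hA => (hct hA).1, ?_⟩,
    fun A => subset_sUnion_of_mem⟩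
  exact (pairwise_sUnion hc.directedOn).2 fun A hA => (hct hA).2

theorem Maximal.exists_dist_lt {E : Type*} [PseudoMetricSpace E] {t M : Set E} {ε : ℝ}
    (hε : 0 < ε) (hM : Maximal (fun A => A ⊆ t ∧ A.Pairwise (fun x y => ε ≤ dist x y)) M)
    {x : E} (hx : x ∈ t) : ∃ y ∈ M, dist x y < ε := by
  by_contra! hfar
  have hxM : x ∈ M := hM.mem_of_prop_insert ⟨insert_subset hx hM.prop.1,
    hM.prop.2.insert fun y hy _ => ⟨hfar y hy, dist_comm x y ▸ hfar y hy⟩⟩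
  exact (hfar x hxM).not_gt (by simpa using hε)

theorem one_le_abs_sub_of_abs_eq_one_of_mul_nonpos {a b : ℝ} (ha : |a| = 1) (hab : a * b ≤ 0) :
    1 ≤ |a - b| := by
  have ha2 : a * a = 1 := by rw [← abs_mul_abs_self, ha, one_mul]
  calc 1 ≤ a * (a - b) := by rw [mul_sub, ha2]; linarith
    _ ≤ |a * (a - b)| := le_abs_self _
    _ = |a - b| := by rw [abs_mul, ha, one_mul]

theorem ContinuousMap.exists_abs_le_one_eqOn_of_finite {X : Type*} [TopologicalSpace X]
    [NormalSpace X] [T1Space X] {s : Set X} (hs : s.Finite) (φ : X → ℝ)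
    (hφ : ∀ x ∈ s, |φ x| ≤ 1) : ∃ g : C(X, ℝ), (∀ x, |g x| ≤ 1) ∧ EqOn g φ s := by
  have : Finite s := hs.to_subtype
  obtain ⟨g, hg, hgφ⟩ := ContinuousMap.exists_restrict_eq_forall_mem_of_closed
    ⟨fun x : s => φ x, continuous_of_discreteTopology⟩ (t := Icc (-1) 1)
    (fun x => abs_le.1 (hφ x x.2)) ⟨0, by norm_num⟩ hs.isClosed
  exact ⟨g, fun x => abs_le.2 (hg x), fun x hx => congr($hgφ ⟨x, hx⟩)⟩

section UnitBall

variable {K : Type*} [TopologicalSpace K] [CompactSpace K]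

theorem ContinuousMap.exists_norm_le_one_forall_one_le_norm_sub [T2Space K] {ι : Type*}
    (f : ι → C(K, ℝ)) (z : ι → K) (hz : (range z).Finite) (σ : K → ℝ)
    (hσ : ∀ i, |σ (z i)| = 1) (hsign : ∀ i, σ (z i) * f i (z i) ≤ 0) :
    ∃ g : C(K, ℝ), ‖g‖ ≤ 1 ∧ ∀ i, 1 ≤ ‖g - f i‖ := by
  obtain ⟨g, hg, hgσ⟩ := exists_abs_le_one_eqOn_of_finite hz σ
    (by rintro _ ⟨i, rfl⟩; exact (hσ i).le)
  refine ⟨g, (ContinuousMap.norm_le _ zero_le_one).2 hg, fun i => ?_⟩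
  have hgz : g (z i) = σ (z i) := hgσ ⟨i, rfl⟩
  calc 1 ≤ |g (z i) - f i (z i)| :=
        one_le_abs_sub_of_abs_eq_one_of_mul_nonpos (hgz ▸ hσ i) (hgz ▸ hsign i)
    _ ≤ ‖g - f i‖ := (g - f i).norm_coe_le_norm (z i)

abbrev IsMaximalSeparatedInUnitBall (M : Set C(K, ℝ)) : Prop :=
  Maximal (fun A => A ⊆ Metric.closedBall 0 1 ∧ A.Pairwise (fun f g => 1 ≤ dist f g)) M

theorem IsMaximalSeparatedInUnitBall.exists_norm_sub_lt_one {M : Set C(K, ℝ)}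
    (hM : IsMaximalSeparatedInUnitBall M) {g : C(K, ℝ)} (hg : ‖g‖ ≤ 1) :
    ∃ f ∈ M, ‖g - f‖ < 1 := by
  simpa [dist_eq_norm] using hM.exists_dist_lt one_pos (x := g) (by simpa using hg)

variable [T2Space K]

theorem IsMaximalSeparatedInUnitBall.separatesPoints {M : Set C(K, ℝ)}
    (hM : IsMaximalSeparatedInUnitBall M) {x y : K} (hxy : x ≠ y) : ∃ f ∈ M, f x ≠ f y := by
  classical
  by_contra! hM_eq
  -- `f` is tested at `y` (where `g = 1`) if `f x = f y ≤ 0`, and at `x` (where `g = -1`) otherwise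
  obtain ⟨g, hg, hfar⟩ := ContinuousMap.exists_norm_le_one_forall_one_le_norm_sub
    (Subtype.val : M → C(K, ℝ)) (fun f => if f.1 x ≤ 0 then y else x)
    ((finite_singleton x).insert y |>.subset <| by
      rintro _ ⟨f, rfl⟩; dsimp only; split_ifs <;> simp)
    (fun p => if p = x then -1 else 1) (fun f => by split_ifs <;> simp)
    (fun f => by
      have := hM_eq f f.2
      split_ifs <;> simp_all; linarith)
  obtain ⟨f, hf, hgf⟩ := hM.exists_norm_sub_lt_one hg
  exact (hfar ⟨f, hf⟩).not_gt hgf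

theorem IsMaximalSeparatedInUnitBall.infinite [Infinite K] {M : Set C(K, ℝ)}
    (hM : IsMaximalSeparatedInUnitBall M) : M.Infinite := by
  intro hfin
  have : Finite M := hfin.to_subtype
  obtain ⟨e⟩ : Nonempty (M ↪ K) := Cardinal.le_def _ _ |>.1 <|
    (lt_aleph0_of_finite M).le.trans (aleph0_le_mk K)
  let σ : M → ℝ := fun f => if f.1 (e f) ≤ 0 then 1 else -1
  obtain ⟨g, hg, hfar⟩ := ContinuousMap.exists_norm_le_one_forall_one_le_norm_sub
    (Subtype.val : M → C(K, ℝ)) e (finite_range e) (Function.extend e σ 0)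
    (fun f => by simp only [e.injective.extend_apply, σ]; split_ifs <;> simp)
    (fun f => by simp only [e.injective.extend_apply, σ]; split_ifs <;> linarith)
  obtain ⟨f, hf, hgf⟩ := hM.exists_norm_sub_lt_one hg
  exact (hfar ⟨f, hf⟩).not_gt hgf

end UnitBall

theorem Cardinal.mk_finset_le_max (α : Type u) : #(Finset α) ≤ max #α ℵ₀ := by
  cases finite_or_infinite α
  · exact (lt_aleph0_of_finite _).le.trans (le_max_right _ _)
  · exact (mk_finset_of_infinite α).le.trans (le_max_left _ _)

theorem weight_le_of_eq_generateFrom {X : Type u} [t : TopologicalSpace X] {s : Set (Set X)}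
    (hs : t = generateFrom s) : weight X ≤ max #s ℵ₀ := by
  have hbasis := isTopologicalBasis_of_subbasis hs
  have hcard : #((fun F => ⋂₀ F) '' {F : Set (Set X) | F.Finite ∧ F ⊆ s}) ≤ #(Finset s) := by
    refine (mk_le_mk_of_subset (t := range fun T : Finset s => ⋂₀ (Subtype.val '' (T : Set s)))
      ?_).trans mk_range_le
    rintro _ ⟨F, ⟨hF, hFs⟩, rfl⟩
    lift F to Set s using hFs
    obtain ⟨T, rfl⟩ := (hF.of_finite_image Subtype.val_injective.injOn).exists_finset_coe
    exact ⟨T, rfl⟩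
  calc weight X ≤ max #((fun F => ⋂₀ F) '' {F : Set (Set X) | F.Finite ∧ F ⊆ s}) ℵ₀ :=
        ciInf_le' (fun B : {B : Set (Set X) // IsTopologicalBasis B} => max #B.1 ℵ₀)
          ⟨_, hbasis⟩
    _ ≤ max #s ℵ₀ := max_le (hcard.trans (mk_finset_le_max s)) (le_max_right _ _)

theorem ContinuousMap.eq_generateFrom_preimage_Ioo_of_separatesPoints {K : Type u}
    [t : TopologicalSpace K] [CompactSpace K] (A : Set C(K, ℝ))
    (hA : ∀ x y, x ≠ y → ∃ f ∈ A, f x ≠ f y) :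
    t = generateFrom (range fun p : A × ℚ × ℚ => p.1.1 ⁻¹' Ioo (p.2.1 : ℝ) p.2.2) := by
  set s := range fun p : A × ℚ × ℚ => p.1.1 ⁻¹' Ioo (p.2.1 : ℝ) p.2.2
  let Φ : K → A → ℝ := fun x f => f.1 x
  have hΦ : IsClosedEmbedding Φ :=
    (continuous_pi fun f => f.1.continuous).isClosedEmbedding fun x y hxy => by
      by_contra hne
      obtain ⟨f, hf, hfxy⟩ := hA x y hne
      exact hfxy congr($hxy ⟨f, hf⟩)
  refine le_antisymm (le_generateFrom ?_) ?_
  · rintro _ ⟨p, rfl⟩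
    exact isOpen_Ioo.preimage p.1.1.continuous
  · rw [hΦ.eq_induced]
    refine continuous_iff_le_induced.1 <| @continuous_pi _ _ _ (generateFrom s) _ _ fun f => ?_
    refine (Real.isTopologicalBasis_Ioo_rat.continuous_iff (t := generateFrom s)).2 ?_
    simp only [mem_iUnion, mem_singleton_iff]
    rintro _ ⟨a, b, -, rfl⟩
    exact GenerateOpen.basic _ ⟨(f, a, b), rfl⟩

theorem weight_le_of_separatesPoints {K : Type u} [TopologicalSpace K] [CompactSpace K]
    (A : Set C(K, ℝ)) (hA : ∀ x y, x ≠ y → ∃ f ∈ A, f x ≠ f y) : weight K ≤ max #A ℵ₀ := by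
  refine (weight_le_of_eq_generateFrom
    (ContinuousMap.eq_generateFrom_preimage_Ioo_of_separatesPoints A hA)).trans ?_
  refine max_le (mk_range_le.trans ?_) (le_max_right _ _)
  rw [mk_prod, lift_uzero]
  exact (mul_le_max _ _).trans (max_le (max_le (le_max_left _ _)
    ((lift_le_aleph0.2 mk_le_aleph0).trans (le_max_right _ _))) (le_max_right _ _))

/-- The closed unit ball of `C(K)` contains a `1`-separated set of cardinality `w(K)`. -/
theorem statement17 (K : Type u) [TopologicalSpace K] [CompactSpace K] [T2Space K] [Infinite K] :
    ∃ A : Set C(K, ℝ), A ⊆ Metric.closedBall 0 1 ∧ #A = weight K ∧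
      ∀ f ∈ A, ∀ g ∈ A, f ≠ g → 1 ≤ ‖f - g‖ := by
  obtain ⟨M, hM⟩ : ∃ M : Set C(K, ℝ), IsMaximalSeparatedInUnitBall M :=
    exists_maximal_subset_pairwise _ _
  have hM_card : max #M ℵ₀ = #M := max_eq_left (infinite_iff.1 hM.infinite.to_subtype)
  have hwM : weight K ≤ #M :=
    hM_card ▸ weight_le_of_separatesPoints M fun _ _ => hM.separatesPoints
  obtain ⟨A, hAM, hA⟩ := le_mk_iff_exists_subset.1 hwM
  refine ⟨A, hAM.trans hM.prop.1, hA, fun f hf g hg hfg => ?_⟩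
  simpa only [dist_eq_norm] using hM.prop.2 (hAM hf) (hAM hg) hfg
end
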